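/- Let (R, m) be a Noetherian local ring of prime characteristic p such that every ideal generated by a system of parameters is Frobenius closed, and suppose there exists N such that every system of parameters contained in m^N is a d-sequence. Then every system of parameters of R is a d-sequence. -/

import Mathlib

/-!
Let `I = (x_1, …, x_{i-1})` and `q = p^N`. If `y x_i x_j ∈ I`, then `y^q x_i^q x_j^q ∈ I^{[q]}`,
which is the ideal generated by the first `i - 1` entries of the system of parameters
`x_1^q, …, x_n^q ∈ m^N`. That system is a d-sequence, so `(y x_j)^q ∈ I^{[q]}`, i.e. `y x_j ∈ I^F`.
Finally `I` is Frobenius closed: `I^F` lies in each Frobenius closed parameter ideal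
`(x_1, …, x_{i-1}, x_i^t, …, x_n^t) ⊆ I + m^t`, and `⋂_t (I + m^t) = I` by Krull's intersection
theorem.
-/

open Ideal IsLocalRing

section Prelim

variable {R : Type*} [CommRing R]

/-- The Frobenius power `I^{[q]}`: the ideal generated by `q`-th powers of elements of `I`. -/
def frobeniusPower (I : Ideal R) (q : ℕ) : Ideal R :=
  Ideal.span ((fun a => a ^ q) '' (I : Set R))

/-- The Frobenius closure `I^F = {x | x^{p^e} ∈ I^{[p^e]} for some e}`. -/
def frobeniusClosure (p : ℕ) (I : Ideal R) : Ideal R :=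
  Ideal.span {x : R | ∃ e : ℕ, x ^ p ^ e ∈ frobeniusPower I (p ^ e)}

/-- `I` is Frobenius closed if `I^F = I`. -/
def IsFrobeniusClosed (p : ℕ) (I : Ideal R) : Prop :=
  frobeniusClosure p I = I

/-- The ideal generated by the entries of `x` before index `i`. -/
def prevSpan {n : ℕ} (x : Fin n → R) (i : Fin n) : Ideal R :=
  Ideal.span (x '' {j : Fin n | j < i})

/-- `x` is a d-sequence. -/
def IsDSequence {n : ℕ} (x : Fin n → R) : Prop :=
  ∀ i j : Fin n, i ≤ j →
    (prevSpan x i).colon (Ideal.span {x i * x j}) = (prevSpan x i).colon (Ideal.span {x j})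

/-- `x` is a (full) system of parameters of the local ring `R`. -/
def IsSOP [IsLocalRing R] {n : ℕ} (x : Fin n → R) : Prop :=
  ringKrullDim R = n ∧
    (Ideal.span (Set.range x)).radical = IsLocalRing.maximalIdeal R

/-- `x` is part of a system of parameters. -/
def IsPartialSOP [IsLocalRing R] {t : ℕ} (x : Fin t → R) : Prop :=
  ∃ (n : ℕ) (h : t ≤ n) (y : Fin n → R), IsSOP y ∧ ∀ i : Fin t, y (Fin.castLE h i) = x i

/-- `x` is a regular sequence on `R`. -/
def IsRegSeq {r : ℕ} (x : Fin r → R) : Prop :=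
  Ideal.span (Set.range x) ≠ ⊤ ∧
    ∀ i : Fin r, ∀ y : R, y * x i ∈ prevSpan x i → y ∈ prevSpan x i

end Prelim

section

variable {R : Type*} [CommRing R]

theorem frobeniusPower_mono {I J : Ideal R} (h : I ≤ J) (q : ℕ) :
    frobeniusPower I q ≤ frobeniusPower J q :=
  span_mono (Set.image_mono h)

theorem frobeniusClosure_mono (p : ℕ) {I J : Ideal R} (h : I ≤ J) :
    frobeniusClosure p I ≤ frobeniusClosure p J :=
  span_mono fun _ ⟨e, he⟩ => ⟨e, frobeniusPower_mono h _ he⟩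

theorem frobeniusPower_span (p : ℕ) [ExpChar R p] (s : Set R) (e : ℕ) :
    frobeniusPower (span s) (p ^ e) = span ((· ^ p ^ e) '' s) := by
  have h : (fun a : R => a ^ p ^ e) = iterateFrobenius R p e := funext (iterateFrobenius_def p e)
  calc frobeniusPower (span s) (p ^ e) = (span s).map (iterateFrobenius R p e) := by
        rw [frobeniusPower, h]; rfl
    _ = _ := by rw [map_span, h]

theorem prevSpan_pow (p : ℕ) [ExpChar R p] {n : ℕ} (x : Fin n → R) (e : ℕ) (i : Fin n) :
    prevSpan (fun k => x k ^ p ^ e) i = frobeniusPower (prevSpan x i) (p ^ e) := by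
  rw [prevSpan, prevSpan, frobeniusPower_span, Set.image_image]

theorem colon_span_mul_eq_of_frobeniusClosure_le {p : ℕ} {I : Ideal R}
    (hI : frobeniusClosure p I ≤ I) {a b : R} (e : ℕ)
    (h : (frobeniusPower I (p ^ e)).colon (span {a ^ p ^ e * b ^ p ^ e}) ≤
      (frobeniusPower I (p ^ e)).colon (span {b ^ p ^ e})) :
    I.colon (span {a * b}) = I.colon (span {b}) := by
  refine le_antisymm (fun y hy => ?_) (Submodule.colon_mono le_rfl ?_)
  · rw [mem_colon_span_singleton] at hy ⊢
    have hq : y ^ p ^ e ∈ (frobeniusPower I (p ^ e)).colon (span {a ^ p ^ e * b ^ p ^ e}) := by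
      rw [mem_colon_span_singleton, ← mul_pow, ← mul_pow]
      exact subset_span ⟨_, hy, rfl⟩
    have hyb := mem_colon_span_singleton.mp (h hq)
    rw [← mul_pow] at hyb
    exact hI (subset_span ⟨e, hyb⟩)
  · exact span_singleton_le_span_singleton.mpr (dvd_mul_left b a)

theorem radical_span_range_pow {ι : Type*} (x : ι → R) {m : ι → ℕ} (hm : ∀ k, m k ≠ 0) :
    (span (Set.range fun k => x k ^ m k)).radical = (span (Set.range x)).radical := by
  apply le_antisymm <;> rw [radical_le_radical_iff, span_le] <;> rintro _ ⟨k, rfl⟩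
  · exact le_radical <|
      pow_mem_of_mem _ (subset_span (Set.mem_range_self k)) _ (Nat.pos_of_ne_zero (hm k))
  · exact mem_radical_of_pow_mem (le_radical (subset_span ⟨k, rfl⟩))

section IsSOP

variable [IsLocalRing R] {n : ℕ} {x : Fin n → R}

theorem IsSOP.pow (hx : IsSOP x) {m : Fin n → ℕ} (hm : ∀ k, m k ≠ 0) :
    IsSOP fun k => x k ^ m k :=
  ⟨hx.1, (radical_span_range_pow x hm).trans hx.2⟩

theorem IsSOP.mem_maximalIdeal (hx : IsSOP x) (k : Fin n) : x k ∈ maximalIdeal R :=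
  hx.2 ▸ le_radical (subset_span ⟨k, rfl⟩)

end IsSOP

theorem iInf_sup_maximalIdeal_pow [IsNoetherianRing R] [IsLocalRing R] (I : Ideal R) :
    ⨅ t : ℕ, I ⊔ maximalIdeal R ^ t = I := by
  refine le_antisymm (fun a ha => ?_) (le_iInf fun _ => le_sup_left)
  rw [← Ideal.Quotient.eq_zero_iff_mem, ← Submodule.mem_bot R,
    ← iInf_pow_smul_eq_bot_of_isLocalRing (maximalIdeal R) (maximalIdeal.isMaximal R).ne_top,
    Submodule.mem_iInf]
  intro t
  obtain ⟨b, hb, c, hc, rfl⟩ := Submodule.mem_sup.mp (mem_iInf.mp ha t)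
  have hmk : Ideal.Quotient.mk I (b + c) = c • (1 : R ⧸ I) := by
    rw [map_add, Ideal.Quotient.eq_zero_iff_mem.mpr hb, zero_add, Algebra.smul_def, mul_one]
    rfl
  rw [hmk]
  exact Submodule.smul_mem_smul hc Submodule.mem_top

theorem frobeniusClosure_prevSpan_le [IsNoetherianRing R] [IsLocalRing R] {p : ℕ}
    (hFC : ∀ (n : ℕ) (x : Fin n → R), IsSOP x →
      IsFrobeniusClosed p (Ideal.span (Set.range x)))
    {n : ℕ} {x : Fin n → R} (hx : IsSOP x) (i : Fin n) :
    frobeniusClosure p (prevSpan x i) ≤ prevSpan x i := by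
  refine le_trans (le_iInf fun t => ?_) (iInf_sup_maximalIdeal_pow (prevSpan x i)).le
  set z : Fin n → R := fun k => x k ^ if k < i then 1 else t + 1
  have hz : IsSOP z := hx.pow fun k => by split_ifs <;> omega
  have hle : prevSpan x i ≤ span (Set.range z) :=
    span_le.mpr fun _ ⟨k, hk, hxk⟩ => subset_span ⟨k, by simp [z, show k < i from hk, hxk]⟩
  have hge : span (Set.range z) ≤ prevSpan x i ⊔ maximalIdeal R ^ t := by
    refine span_le.mpr ?_
    rintro _ ⟨k, rfl⟩
    by_cases hk : k < i
    · exact mem_sup_left (subset_span ⟨k, hk, by simp [z, hk]⟩)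
    · refine mem_sup_right (pow_le_pow_right t.le_succ ?_)
      simpa [z, hk] using pow_mem_pow (hx.mem_maximalIdeal k) (t + 1)
  calc frobeniusClosure p (prevSpan x i) ≤ frobeniusClosure p (span (Set.range z)) :=
        frobeniusClosure_mono p hle
    _ = span (Set.range z) := hFC n z hz
    _ ≤ _ := hge

end

/-- if every sop-generated ideal is Frobenius closed and every system of
parameters inside `m^N` is a d-sequence, then every system of parameters is a d-sequence. -/
theorem every_sop_dseq
    {R : Type*} [CommRing R] [IsNoetherianRing R] [IsLocalRing R]
    (p : ℕ) [Fact p.Prime] [CharP R p]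
    (hFC : ∀ (n : ℕ) (x : Fin n → R), IsSOP x →
      IsFrobeniusClosed p (Ideal.span (Set.range x)))
    (N : ℕ)
    (hN : ∀ (n : ℕ) (x : Fin n → R), IsSOP x →
      (∀ i, x i ∈ (IsLocalRing.maximalIdeal R) ^ N) → IsDSequence x) :
    ∀ (n : ℕ) (x : Fin n → R), IsSOP x → IsDSequence x := by
  intro n x hx i j hij
  have hp : 1 < p := (Fact.out : p.Prime).one_lt
  have hxq : IsSOP fun k => x k ^ p ^ N := hx.pow (m := fun _ => p ^ N) fun _ => by positivity
  have hxqN : ∀ k, x k ^ p ^ N ∈ maximalIdeal R ^ N := fun k =>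
    pow_le_pow_right (Nat.lt_pow_self hp).le (pow_mem_pow (hx.mem_maximalIdeal k) _)
  refine colon_span_mul_eq_of_frobeniusClosure_le (frobeniusClosure_prevSpan_le hFC hx i) N ?_
  rw [← prevSpan_pow]
  exact (hN n _ hxq hxqN i j hij).le
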